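/- arXiv:2605.02420 — 2 statements merged into one kernel-verified Lean document; each statement's English description precedes it below -/
import Mathlib

section
/- Under the stated tail assumption on ν, there exists a constant C > 0 such that for all 0 ≤ x ≤ y ≤ 1 one has 0 ≤ H(y) − H(x) ≤ C (y − x) y^β. -/
set_option autoImplicit false

open MeasureTheory Filter Set

/-!
With `φ_z(u) = e^{-zu} + zu`, the mean-one assumption gives `H(u) = E[φ_Z(u)] - 1`. Each `φ_z`
(`z ≥ 0`) is nondecreasing and convex on `[0, ∞)` with `φ_z'(u) = z (1 - e^{-zu})`, so
`0 ≤ H(y) - H(x) ≤ (y - x) E[Z (1 - e^{-Zy})]`. By the layer cake formula this expectation is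
`∫₀^∞ P(Z > t) g_y(t) dt` with `g_y(t) = d/dt [t (1 - e^{-ty})] ≤ 2 min(1, ty)`, and the tail
bound `P(Z > t) ≤ K t^{-(1+β)}` for all `t > 0` makes it at most `2K (1/(1-β) + 1/β) y^β`.
-/

open Real

lemma exp_neg_mul_add_mul_le_of_le {z x y : ℝ} (hz : 0 ≤ z) (hx : 0 ≤ x) (hxy : x ≤ y) :
    exp (-(z * x)) + z * x ≤ exp (-(z * y)) + z * y := by
  have hsplit : exp (-(z * y)) = exp (-(z * x)) * exp (-(z * (y - x))) := by
    rw [← exp_add]; ring_nf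
  have hd : 0 ≤ z * (y - x) := mul_nonneg hz (sub_nonneg.mpr hxy)
  have htangent : 1 - z * (y - x) ≤ exp (-(z * (y - x))) := by
    linarith [add_one_le_exp (-(z * (y - x)))]
  have hle_one : exp (-(z * x)) ≤ 1 := exp_le_one_iff.mpr (by nlinarith)
  rw [hsplit]
  nlinarith [exp_pos (-(z * x))]

lemma exp_neg_mul_add_mul_sub_le (z x y : ℝ) :
    exp (-(z * y)) + z * y - (exp (-(z * x)) + z * x) ≤ (y - x) * (z * (1 - exp (-(z * y)))) := by
  have hsplit : exp (-(z * x)) = exp (-(z * y)) * exp (z * (y - x)) := by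
    rw [← exp_add]; ring_nf
  rw [hsplit]
  nlinarith [add_one_le_exp (z * (y - x)), exp_pos (-(z * y))]

lemma one_sub_exp_neg_add_mul_exp_neg_le {a : ℝ} (ha : 0 ≤ a) :
    1 - exp (-a) + a * exp (-a) ≤ 2 * min 1 a := by
  have hle_one : exp (-a) ≤ 1 := exp_le_one_iff.mpr (by linarith)
  have htangent : 1 - a ≤ exp (-a) := by linarith [add_one_le_exp (-a)]
  have hmul_le_one : a * exp (-a) ≤ 1 := by
    calc a * exp (-a) ≤ exp a * exp (-a) := by gcongr; linarith [add_one_le_exp a]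
      _ = 1 := by rw [← exp_add, add_neg_cancel, exp_zero]
  rcases le_total 1 a with h | h
  · rw [min_eq_left h]
    linarith [exp_pos (-a)]
  · rw [min_eq_right h]
    nlinarith [mul_le_mul_of_nonneg_left hle_one ha]

lemma hasDerivAt_mul_one_sub_exp_neg_mul (u t : ℝ) :
    HasDerivAt (fun s => s * (1 - exp (-(s * u))))
      (1 - exp (-(t * u)) + t * u * exp (-(t * u))) t := by
  have hinner : HasDerivAt (fun s => -(s * u)) (-u) t := (hasDerivAt_mul_const u).neg
  exact ((hasDerivAt_id' t).fun_mul (hinner.exp.const_sub 1)).congr_deriv (by ring)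

lemma lintegral_mul_one_sub_exp_neg_mul_eq (ν : Measure ℝ) (hν : ∀ᵐ z ∂ν, 0 ≤ z) {u : ℝ}
    (hu : 0 ≤ u) :
    ∫⁻ z, ENNReal.ofReal (z * (1 - exp (-(z * u)))) ∂ν =
      ∫⁻ t in Ioi 0, ν (Ioi t) *
        ENNReal.ofReal (1 - exp (-(t * u)) + t * u * exp (-(t * u))) := by
  have hg_nonneg : ∀ t : ℝ, 0 ≤ t → 0 ≤ 1 - exp (-(t * u)) + t * u * exp (-(t * u)) := by
    intro t ht
    have : exp (-(t * u)) ≤ 1 := exp_le_one_iff.mpr (by nlinarith)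
    have : 0 ≤ t * u * exp (-(t * u)) := by positivity
    linarith
  have hftc : ∀ z : ℝ,
      ∫ t in (0)..z, (1 - exp (-(t * u)) + t * u * exp (-(t * u))) =
        z * (1 - exp (-(z * u))) := by
    intro z
    rw [intervalIntegral.integral_eq_sub_of_hasDerivAt
      (fun t _ => hasDerivAt_mul_one_sub_exp_neg_mul u t)
      ((by fun_prop : Continuous _).intervalIntegrable 0 z)]
    simp
  simp_rw [← hftc]
  exact lintegral_comp_eq_lintegral_meas_lt_mul ν hν aemeasurable_id
    (fun t _ => (by fun_prop : Continuous _).intervalIntegrable 0 t)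
    (ae_restrict_of_forall_mem measurableSet_Ioi fun t ht => hg_nonneg t (le_of_lt ht))

lemma lintegral_Ioc_zero_rpow {r : ℝ} (hr : -1 < r) {A : ℝ} (hA : 0 ≤ A) :
    ∫⁻ t in Ioc 0 A, ENNReal.ofReal (t ^ r) = ENNReal.ofReal (A ^ (r + 1) / (r + 1)) := by
  rw [← ofReal_integral_eq_lintegral_ofReal (intervalIntegral.intervalIntegrable_rpow' hr).1
      (ae_restrict_of_forall_mem measurableSet_Ioc fun t ht => rpow_nonneg ht.1.le r),
    ← intervalIntegral.integral_of_le hA, integral_rpow (Or.inl hr),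
    zero_rpow (by linarith), sub_zero]

lemma lintegral_Ioi_rpow {r : ℝ} (hr : r < -1) {A : ℝ} (hA : 0 < A) :
    ∫⁻ t in Ioi A, ENNReal.ofReal (t ^ r) = ENNReal.ofReal (-A ^ (r + 1) / (r + 1)) := by
  rw [← ofReal_integral_eq_lintegral_ofReal (integrableOn_Ioi_rpow_of_lt hr hA)
      (ae_restrict_of_forall_mem measurableSet_Ioi fun t ht => rpow_nonneg (hA.trans ht).le r),
    integral_Ioi_rpow_of_lt hr hA]

lemma lintegral_min_one_mul_rpow_le {β : ℝ} (hβ : β ∈ Ioo (0 : ℝ) 1) {u : ℝ} (hu : 0 < u) :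
    ∫⁻ t in Ioi 0, ENNReal.ofReal (min 1 (t * u) * t ^ (-(1 + β)))
      ≤ ENNReal.ofReal ((1 / (1 - β) + 1 / β) * u ^ β) := by
  obtain ⟨hβ0, hβ1⟩ := hβ
  have hA : 0 < u⁻¹ := inv_pos.mpr hu
  have near : ∫⁻ t in Ioc 0 u⁻¹, ENNReal.ofReal (min 1 (t * u) * t ^ (-(1 + β)))
      ≤ ENNReal.ofReal (u ^ β / (1 - β)) := by
    calc _ ≤ ∫⁻ t in Ioc 0 u⁻¹, ENNReal.ofReal u * ENNReal.ofReal (t ^ (-β)) := by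
          refine setLIntegral_mono (by fun_prop) fun t ht => ?_
          have hpow : t ^ (-β) = t ^ (-(1 + β)) * t := by
            rw [← rpow_add_one ht.1.ne']; ring_nf
          rw [← ENNReal.ofReal_mul hu.le, hpow]
          refine ENNReal.ofReal_le_ofReal ?_
          calc min 1 (t * u) * t ^ (-(1 + β)) ≤ t * u * t ^ (-(1 + β)) :=
                mul_le_mul_of_nonneg_right (min_le_right _ _) (rpow_nonneg ht.1.le _)
            _ = u * (t ^ (-(1 + β)) * t) := by ring
      _ = ENNReal.ofReal u * ENNReal.ofReal (u⁻¹ ^ (-β + 1) / (-β + 1)) := by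
          rw [lintegral_const_mul _ (by fun_prop), lintegral_Ioc_zero_rpow (by linarith) hA.le]
      _ = ENNReal.ofReal (u ^ β / (1 - β)) := by
          rw [← ENNReal.ofReal_mul hu.le, inv_rpow hu.le, ← rpow_neg hu.le, mul_div_assoc',
            ← rpow_one_add' hu.le (by ring_nf; exact hβ0.ne')]
          ring_nf
  have far : ∫⁻ t in Ioi u⁻¹, ENNReal.ofReal (min 1 (t * u) * t ^ (-(1 + β)))
      ≤ ENNReal.ofReal (u ^ β / β) := by
    calc _ ≤ ∫⁻ t in Ioi u⁻¹, ENNReal.ofReal (t ^ (-(1 + β))) :=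
          setLIntegral_mono (by fun_prop) fun t ht => ENNReal.ofReal_le_ofReal
            (mul_le_of_le_one_left (rpow_nonneg (hA.trans ht).le _) (min_le_left _ _))
      _ = ENNReal.ofReal (u ^ β / β) := by
          rw [lintegral_Ioi_rpow (by linarith) hA, show -(1 + β) + 1 = -β by ring,
            inv_rpow hu.le, rpow_neg hu.le, inv_inv, neg_div_neg_eq]
  have hsum : ENNReal.ofReal (u ^ β / (1 - β)) + ENNReal.ofReal (u ^ β / β)
      = ENNReal.ofReal ((1 / (1 - β) + 1 / β) * u ^ β) := by
    rw [← ENNReal.ofReal_add (div_nonneg (by positivity) (by linarith)) (by positivity)]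
    ring_nf
  rw [← Ioc_union_Ioi_eq_Ioi hA.le, lintegral_union measurableSet_Ioi Ioc_disjoint_Ioi_same,
    ← hsum]
  exact add_le_add near far

lemma integral_mul_one_sub_exp_neg_mul_le (ν : Measure ℝ) (hν : ∀ᵐ z ∂ν, 0 ≤ z) {β K : ℝ}
    (hβ : β ∈ Ioo (0 : ℝ) 1) (hK : 0 ≤ K)
    (htail : ∀ t > 0, ν (Ioi t) ≤ ENNReal.ofReal (K * t ^ (-(1 + β)))) {u : ℝ} (hu : 0 ≤ u) :
    ∫ z, z * (1 - exp (-(z * u))) ∂ν ≤ 2 * K * (1 / (1 - β) + 1 / β) * u ^ β := by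
  have hβ1 : 0 < 1 - β := sub_pos.mpr hβ.2
  rcases hu.eq_or_lt with rfl | hu
  · simp [zero_rpow hβ.1.ne']
  have hf_nonneg : 0 ≤ᵐ[ν] fun z => z * (1 - exp (-(z * u))) := by
    filter_upwards [hν] with z hz
    exact mul_nonneg hz (sub_nonneg.mpr (exp_le_one_iff.mpr (by nlinarith)))
  rw [integral_eq_lintegral_of_nonneg_ae hf_nonneg (by fun_prop)]
  refine ENNReal.toReal_le_of_le_ofReal (by have := hβ.1; positivity) ?_
  rw [lintegral_mul_one_sub_exp_neg_mul_eq ν hν hu.le]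
  calc _ ≤ ∫⁻ t in Ioi 0, ENNReal.ofReal (2 * K) *
          ENNReal.ofReal (min 1 (t * u) * t ^ (-(1 + β))) := by
        refine setLIntegral_mono (by fun_prop) fun t (ht : 0 < t) => ?_
        calc _ ≤ ENNReal.ofReal (K * t ^ (-(1 + β))) * ENNReal.ofReal (2 * min 1 (t * u)) :=
              mul_le_mul' (htail t ht)
                (ENNReal.ofReal_le_ofReal (one_sub_exp_neg_add_mul_exp_neg_le (by positivity)))
          _ = _ := by
              rw [← ENNReal.ofReal_mul (by positivity), ← ENNReal.ofReal_mul (by positivity)]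
              ring_nf
    _ ≤ ENNReal.ofReal (2 * K) * ENNReal.ofReal ((1 / (1 - β) + 1 / β) * u ^ β) := by
        rw [lintegral_const_mul _ (by fun_prop)]
        gcongr
        exact lintegral_min_one_mul_rpow_le hβ hu
    _ = _ := by
        rw [← ENNReal.ofReal_mul (by positivity)]
        ring_nf

lemma exists_measure_Ioi_le_rpow (ν : Measure ℝ) [IsProbabilityMeasure ν] {p c : ℝ} (hp : 0 ≤ p)
    (h : Tendsto (fun x : ℝ => x ^ p * (ν (Ioi x)).toReal) atTop (nhds c)) :
    ∃ K > 0, ∀ t > 0, ν (Ioi t) ≤ ENNReal.ofReal (K * t ^ (-p)) := by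
  obtain ⟨M, hM⟩ := eventually_atTop.mp (h.eventually (eventually_le_nhds (lt_add_one c)))
  set M' := max M 1
  have hM' : 0 < M' := zero_lt_one.trans_le (le_max_right _ _)
  set K := max (c + 1) (M' ^ p)
  have hK : 0 < K := lt_max_of_lt_right (rpow_pos_of_pos hM' p)
  refine ⟨K, hK, fun t ht => ?_⟩
  have hcancel : t ^ p * t ^ (-p) = 1 := by rw [← rpow_add ht, add_neg_cancel, rpow_zero]
  rw [ENNReal.le_ofReal_iff_toReal_le (measure_ne_top ν _) (by positivity)]
  rcases le_total M' t with hMt | htM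
  · calc (ν (Ioi t)).toReal = t ^ (-p) * (t ^ p * (ν (Ioi t)).toReal) := by
          rw [← mul_assoc, mul_comm (t ^ (-p)), hcancel, one_mul]
      _ ≤ t ^ (-p) * (c + 1) := by gcongr; exact hM t ((le_max_left _ _).trans hMt)
      _ ≤ K * t ^ (-p) := by rw [mul_comm]; gcongr; exact le_max_left _ _
  · calc (ν (Ioi t)).toReal ≤ 1 := measureReal_le_one
      _ = t ^ p * t ^ (-p) := hcancel.symm
      _ ≤ K * t ^ (-p) := by
          gcongr
          exact (rpow_le_rpow ht.le htM hp).trans (le_max_right _ _)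

lemma integrable_exp_neg_mul (ν : Measure ℝ) [IsFiniteMeasure ν] (hν : ∀ᵐ z ∂ν, 0 ≤ z) {u : ℝ}
    (hu : 0 ≤ u) : Integrable (fun z => exp (-(z * u))) ν :=
  (integrable_const 1).mono' (by fun_prop) <| by
    filter_upwards [hν] with z hz
    rw [norm_of_nonneg (exp_pos _).le, exp_le_one_iff]
    exact neg_nonpos.mpr (mul_nonneg hz hu)

lemma integrable_mul_one_sub_exp_neg_mul (ν : Measure ℝ) (hν : ∀ᵐ z ∂ν, 0 ≤ z)
    (hint : Integrable (fun z : ℝ => z) ν) {u : ℝ} (hu : 0 ≤ u) :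
    Integrable (fun z => z * (1 - exp (-(z * u)))) ν :=
  hint.mono' (by fun_prop) <| by
    filter_upwards [hν] with z hz
    have hle_one := exp_le_one_iff.mpr (neg_nonpos.mpr (mul_nonneg hz hu))
    rw [norm_of_nonneg (mul_nonneg hz (sub_nonneg.mpr hle_one))]
    nlinarith [exp_pos (-(z * u))]

theorem stmt1_general
    (ν : Measure ℝ) [IsProbabilityMeasure ν]
    (hν_supp : ν (Iio 0) = 0)
    (hν_mean : ∫ x, x ∂ν = 1)
    (β cν : ℝ) (hβ : β ∈ Ioo (0 : ℝ) 1)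
    (hν_tail : Tendsto (fun x : ℝ => x ^ (1 + β) * (ν (Ioi x)).toReal)
      atTop (nhds cν))
    (G H : ℝ → ℝ)
    (hG : ∀ s, G s = ∫ z, Real.exp (-z * (1 - s)) ∂ν)
    (hH : ∀ u, H u = G (1 - u) - 1 + u) :
    ∃ C > 0, ∀ x y : ℝ, 0 ≤ x → x ≤ y → y ≤ 1 →
      0 ≤ H y - H x ∧ H y - H x ≤ C * (y - x) * y ^ β := by
  obtain ⟨K, hK, htail⟩ :=
    exists_measure_Ioi_le_rpow ν (by linarith [hβ.1] : 0 ≤ 1 + β) hν_tail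
  have hZ : ∀ᵐ z ∂ν, 0 ≤ z :=
    ae_iff.mpr (measure_mono_null (fun z hz => not_le.mp hz) hν_supp)
  have hZ_int : Integrable (fun z : ℝ => z) ν :=
    Integrable.of_integral_ne_zero (by rw [hν_mean]; exact one_ne_zero)
  have hφ_int : ∀ u, 0 ≤ u → Integrable (fun z => exp (-(z * u)) + z * u) ν :=
    fun u hu => (integrable_exp_neg_mul ν hZ hu).add (hZ_int.mul_const u)
  have hH_eq : ∀ u, 0 ≤ u → H u = ∫ z, (exp (-(z * u)) + z * u) ∂ν - 1 := by
    intro u hu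
    simp only [hH, hG, sub_sub_cancel, neg_mul]
    rw [integral_add (integrable_exp_neg_mul ν hZ hu) (hZ_int.mul_const u), integral_mul_const,
      hν_mean]
    ring
  refine ⟨2 * K * (1 / (1 - β) + 1 / β), by have := sub_pos.mpr hβ.2; have := hβ.1; positivity,
    fun x y hx hxy _ => ?_⟩
  have hy : 0 ≤ y := hx.trans hxy
  rw [hH_eq y hy, hH_eq x hx, sub_sub_sub_cancel_right, ← integral_sub (hφ_int y hy) (hφ_int x hx)]
  constructor
  · exact integral_nonneg_of_ae <|
      hZ.mono fun z hz => sub_nonneg.mpr (exp_neg_mul_add_mul_le_of_le hz hx hxy)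
  · calc _ ≤ ∫ z, (y - x) * (z * (1 - exp (-(z * y)))) ∂ν :=
          integral_mono ((hφ_int y hy).sub (hφ_int x hx))
            ((integrable_mul_one_sub_exp_neg_mul ν hZ hZ_int hy).const_mul _)
            fun z => exp_neg_mul_add_mul_sub_le z x y
      _ ≤ (y - x) * (2 * K * (1 / (1 - β) + 1 / β) * y ^ β) := by
          rw [integral_const_mul]
          exact mul_le_mul_of_nonneg_left
            (integral_mul_one_sub_exp_neg_mul_le ν hZ hβ hK.le htail hy) (sub_nonneg.mpr hxy)
      _ = _ := by ring

/-- Under the tail assumption on ν, there is `C > 0` such that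
for all `0 ≤ x ≤ y ≤ 1`, `0 ≤ H(y) - H(x) ≤ C (y - x) y^β`, where
`H(u) = G(1-u) - 1 + u` and `G` is the Laplace transform of ν. -/
theorem stmt1
    (ν : Measure ℝ) [IsProbabilityMeasure ν]
    (hν_supp : ν (Iio 0) = 0)
    (hν_mean : ∫ x, x ∂ν = 1)
    (β cν : ℝ) (hβ : β ∈ Ioo (0 : ℝ) 1) (hcν : 0 < cν)
    (hν_tail : Tendsto (fun x : ℝ => x ^ (1 + β) * (ν (Ioi x)).toReal)
      atTop (nhds cν))
    (G H : ℝ → ℝ)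
    (hG : ∀ s, G s = ∫ z, Real.exp (-z * (1 - s)) ∂ν)
    (hH : ∀ u, H u = G (1 - u) - 1 + u) :
    ∃ C > 0, ∀ x y : ℝ, 0 ≤ x → x ≤ y → y ≤ 1 →
      0 ≤ H y - H x ∧ H y - H x ≤ C * (y - x) * y ^ β :=
  stmt1_general ν hν_supp hν_mean β cν hβ hν_tail G H hG hH
end

section
/- Let v : [0,∞) → [0,∞) be a bounded Borel solution of equation (E) vanishing outside [0,a]. Then for every t ≥ 0 one has v(t) ≤ βc ∫_0^∞ f(t+s) s^{β−1} ds = c ∑_{k=1}^m θ_k ((t_k − t)_+)^β. In particular ∫_0^∞ v(t) dt ≤ (c/(1+β)) ∑_{k=1}^m θ_k t_k^{1+β}, so that for fixed t_1,…,t_m the map (θ_1,…,θ_m) ↦ ∫_0^∞ v(t) dt tends to 0 as (θ_1,…,θ_m) → (0,…,0). -/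
set_option autoImplicit false

open MeasureTheory Set

/-!
Because `K v^{1+β} ≥ 0`, dropping the absorption term from (E) only increases its right-hand
side, so `v(t) ≤ βc ∫₀^∞ f(t+s) s^{β-1} ds`. For the step function `f` this kernel integral is
explicit: each `1_{[0,t_k]}(t+·)` cuts `s^{β-1}` off at `t_k - t`, giving `c ∑ θ_k ((t_k - t)_+)^β`.
Integrating the bound over `t` gives `∫ v ≤ c/(1+β) ∑ θ_k t_k^{1+β}`, which is linear in `θ`.
-/

/-- If `g - h` is not integrable, the left-hand side is the junk value `0`. -/
lemma integral_sub_le_of_nonneg {α : Type*} [MeasurableSpace α] {μ : Measure α} {g h : α → ℝ}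
    (hg : Integrable g μ) (hg0 : 0 ≤ᵐ[μ] g) (hh : 0 ≤ᵐ[μ] h) :
    ∫ x, g x - h x ∂μ ≤ ∫ x, g x ∂μ := by
  by_cases hgh : Integrable (fun x => g x - h x) μ
  · refine integral_mono_ae hgh hg ?_
    filter_upwards [hh] with x hx using sub_le_self _ hx
  · rw [integral_undef hgh]
    exact integral_nonneg_of_ae hg0

section RpowKernel

variable {β : ℝ}

lemma integrableOn_rpow_sub_one_Ioc (hβ : 0 < β) (r : ℝ) :
    IntegrableOn (fun s : ℝ => s ^ (β - 1)) (Ioc 0 r) :=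
  (intervalIntegral.intervalIntegrable_rpow' (by linarith)).1

lemma integral_rpow_sub_one_Ioc (hβ : 0 < β) (r : ℝ) :
    ∫ s in Ioc (0 : ℝ) r, s ^ (β - 1) = max r 0 ^ β / β := by
  rcases le_or_gt r 0 with hr | hr
  · rw [Ioc_eq_empty hr.not_gt, max_eq_right hr, Real.zero_rpow hβ.ne',
      Measure.restrict_empty, integral_zero_measure, zero_div]
  · rw [max_eq_left hr.le, ← intervalIntegral.integral_of_le hr.le,
      integral_rpow (Or.inl (by linarith)), sub_add_cancel, Real.zero_rpow hβ.ne', sub_zero]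

lemma indicator_Icc_add_mul_rpow_eqOn {t : ℝ} (ht : 0 ≤ t) (r θ : ℝ) :
    EqOn (fun s : ℝ => indicator (Icc 0 r) (fun _ => θ) (t + s) * s ^ (β - 1))
      (indicator (Iic (r - t)) (fun s => θ * s ^ (β - 1))) (Ioi 0) := by
  intro s (hs : 0 < s)
  dsimp only
  by_cases hst : t + s ≤ r
  · rw [indicator_of_mem (show t + s ∈ Icc 0 r from ⟨by linarith, hst⟩),
      indicator_of_mem (show s ∈ Iic (r - t) by simp only [mem_Iic]; linarith)]
  · rw [indicator_of_notMem (fun h => hst h.2),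
      indicator_of_notMem (show s ∉ Iic (r - t) by simp only [mem_Iic]; linarith), zero_mul]

lemma integrableOn_indicator_Icc_add_mul_rpow (hβ : 0 < β) {t : ℝ} (ht : 0 ≤ t) (r θ : ℝ) :
    IntegrableOn (fun s : ℝ => indicator (Icc 0 r) (fun _ => θ) (t + s) * s ^ (β - 1))
      (Ioi 0) := by
  rw [integrableOn_congr_fun (indicator_Icc_add_mul_rpow_eqOn ht r θ) measurableSet_Ioi,
    IntegrableOn, integrable_indicator_iff measurableSet_Iic, IntegrableOn,
    Measure.restrict_restrict measurableSet_Iic, inter_comm, Ioi_inter_Iic]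
  exact (integrableOn_rpow_sub_one_Ioc hβ _).const_mul θ

lemma integral_indicator_Icc_add_mul_rpow (hβ : 0 < β) {t : ℝ} (ht : 0 ≤ t) (r θ : ℝ) :
    ∫ s in Ioi 0, indicator (Icc 0 r) (fun _ => θ) (t + s) * s ^ (β - 1)
      = θ * (max (r - t) 0 ^ β / β) := by
  rw [setIntegral_congr_fun measurableSet_Ioi (indicator_Icc_add_mul_rpow_eqOn ht r θ),
    setIntegral_indicator measurableSet_Iic, Ioi_inter_Iic, integral_const_mul,
    integral_rpow_sub_one_Ioc hβ]

lemma max_sub_rpow_eq_indicator (hβ : 0 < β) (r t : ℝ) :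
    max (r - t) 0 ^ β = indicator (Iic r) (fun t => (r - t) ^ β) t := by
  by_cases htr : t ≤ r
  · rw [indicator_of_mem (show t ∈ Iic r from htr), max_eq_left (by linarith)]
  · rw [indicator_of_notMem (show t ∉ Iic r from htr), max_eq_right (by linarith),
      Real.zero_rpow hβ.ne']

lemma integrableOn_max_sub_rpow (hβ : 0 < β) (r : ℝ) :
    IntegrableOn (fun t : ℝ => max (r - t) 0 ^ β) (Ioi 0) := by
  simp only [max_sub_rpow_eq_indicator hβ r]
  rw [IntegrableOn, integrable_indicator_iff measurableSet_Iic, IntegrableOn,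
    Measure.restrict_restrict measurableSet_Iic, inter_comm, Ioi_inter_Iic]
  exact (((continuous_const.sub continuous_id).rpow_const
    fun _ => Or.inr hβ.le).intervalIntegrable 0 r).1

lemma integral_max_sub_rpow (hβ : 0 < β) {r : ℝ} (hr : 0 ≤ r) :
    ∫ t in Ioi 0, max (r - t) 0 ^ β = r ^ (1 + β) / (1 + β) := by
  simp only [max_sub_rpow_eq_indicator hβ r]
  rw [setIntegral_indicator measurableSet_Iic, Ioi_inter_Iic,
    ← intervalIntegral.integral_of_le hr,
    intervalIntegral.integral_comp_sub_left (fun u => u ^ β) r, sub_self, sub_zero,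
    integral_rpow (Or.inl (by linarith)), Real.zero_rpow (by linarith), sub_zero, add_comm]

end RpowKernel

noncomputable def stepFun {ι : Type*} (S : Finset ι) (θ tk : ι → ℝ) (t : ℝ) : ℝ :=
  ∑ k ∈ S, indicator (Icc 0 (tk k)) (fun _ => θ k) t

def SolvesE (β K c : ℝ) (f v : ℝ → ℝ) : Prop :=
  ∀ t ≥ (0 : ℝ), v t = β * c * ∫ s in Ioi 0, (f (t + s) - K * v (t + s) ^ (1 + β)) * s ^ (β - 1)

section StepFun

variable {ι : Type*} {S : Finset ι} {θ tk : ι → ℝ} {β : ℝ}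

lemma stepFun_nonneg (hθ : ∀ k ∈ S, 0 ≤ θ k) (t : ℝ) : 0 ≤ stepFun S θ tk t :=
  Finset.sum_nonneg fun k hk => indicator_nonneg (fun _ _ => hθ k hk) t

lemma integrableOn_stepFun_add_mul_rpow (hβ : 0 < β) {t : ℝ} (ht : 0 ≤ t) :
    IntegrableOn (fun s => stepFun S θ tk (t + s) * s ^ (β - 1)) (Ioi 0) := by
  simp only [stepFun, Finset.sum_mul]
  exact integrable_finsetSum _ fun k _ =>
    integrableOn_indicator_Icc_add_mul_rpow hβ ht (tk k) (θ k)

lemma integral_stepFun_add_mul_rpow (hβ : 0 < β) {t : ℝ} (ht : 0 ≤ t) :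
    β * ∫ s in Ioi 0, stepFun S θ tk (t + s) * s ^ (β - 1)
      = ∑ k ∈ S, θ k * max (tk k - t) 0 ^ β := by
  simp only [stepFun, Finset.sum_mul]
  rw [integral_finsetSum _ fun k _ => integrableOn_indicator_Icc_add_mul_rpow hβ ht (tk k) (θ k),
    Finset.mul_sum]
  refine Finset.sum_congr rfl fun k _ => ?_
  rw [integral_indicator_Icc_add_mul_rpow hβ ht]
  field_simp

lemma integrableOn_sum_mul_max_sub_rpow (hβ : 0 < β) :
    IntegrableOn (fun t => ∑ k ∈ S, θ k * max (tk k - t) 0 ^ β) (Ioi 0) :=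
  integrable_finsetSum _ fun k _ => (integrableOn_max_sub_rpow hβ (tk k)).const_mul (θ k)

lemma integral_sum_mul_max_sub_rpow (hβ : 0 < β) (htk : ∀ k ∈ S, 0 ≤ tk k) :
    ∫ t in Ioi 0, ∑ k ∈ S, θ k * max (tk k - t) 0 ^ β
      = (1 + β)⁻¹ * ∑ k ∈ S, θ k * tk k ^ (1 + β) := by
  rw [integral_finsetSum _ fun k _ => (integrableOn_max_sub_rpow hβ (tk k)).const_mul (θ k),
    Finset.mul_sum]
  refine Finset.sum_congr rfl fun k hk => ?_
  rw [integral_const_mul, integral_max_sub_rpow hβ (htk k hk)]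
  ring

end StepFun

section Solution

variable {β K c : ℝ} {f v : ℝ → ℝ}

lemma SolvesE.le_kernel (hv : SolvesE β K c f v) (hβ : 0 ≤ β) (hK : 0 ≤ K) (hc : 0 ≤ c)
    (hf : ∀ x, 0 ≤ f x) (hv_nonneg : ∀ x, 0 ≤ v x) {t : ℝ} (ht : 0 ≤ t)
    (hfi : IntegrableOn (fun s => f (t + s) * s ^ (β - 1)) (Ioi 0)) :
    v t ≤ β * c * ∫ s in Ioi 0, f (t + s) * s ^ (β - 1) := by
  have hpow : ∀ᵐ s ∂volume.restrict (Ioi (0 : ℝ)), 0 ≤ s ^ (β - 1) := by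
    filter_upwards [ae_restrict_mem measurableSet_Ioi] with s hs
    exact Real.rpow_nonneg (le_of_lt hs) _
  rw [hv t ht]
  simp only [sub_mul]
  refine mul_le_mul_of_nonneg_left (integral_sub_le_of_nonneg hfi ?_ ?_) (by positivity)
  · filter_upwards [hpow] with s hs using mul_nonneg (hf _) hs
  · filter_upwards [hpow] with s hs
    exact mul_nonneg (mul_nonneg hK (Real.rpow_nonneg (hv_nonneg _) _)) hs

variable {ι : Type*} {S : Finset ι} {θ tk : ι → ℝ}

lemma SolvesE.le_sum_mul_max_sub_rpow (hv : SolvesE β K c (stepFun S θ tk) v) (hβ : 0 < β)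
    (hK : 0 ≤ K) (hc : 0 ≤ c) (hθ : ∀ k ∈ S, 0 ≤ θ k) (hv_nonneg : ∀ x, 0 ≤ v x)
    {t : ℝ} (ht : 0 ≤ t) :
    v t ≤ c * ∑ k ∈ S, θ k * max (tk k - t) 0 ^ β := by
  rw [← integral_stepFun_add_mul_rpow hβ ht, mul_left_comm, ← mul_assoc]
  exact hv.le_kernel hβ.le hK hc (stepFun_nonneg hθ) hv_nonneg ht
    (integrableOn_stepFun_add_mul_rpow hβ ht)

lemma SolvesE.integral_le (hv : SolvesE β K c (stepFun S θ tk) v) (hβ : 0 < β)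
    (hK : 0 ≤ K) (hc : 0 ≤ c) (hθ : ∀ k ∈ S, 0 ≤ θ k) (htk : ∀ k ∈ S, 0 ≤ tk k)
    (hv_nonneg : ∀ x, 0 ≤ v x) :
    ∫ t in Ioi 0, v t ≤ c / (1 + β) * ∑ k ∈ S, θ k * tk k ^ (1 + β) := by
  calc ∫ t in Ioi 0, v t ≤ ∫ t in Ioi 0, c * ∑ k ∈ S, θ k * max (tk k - t) 0 ^ β := by
        refine integral_mono_of_nonneg (ae_of_all _ hv_nonneg)
          ((integrableOn_sum_mul_max_sub_rpow hβ).const_mul c) ?_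
        filter_upwards [ae_restrict_mem measurableSet_Ioi] with t ht
        exact hv.le_sum_mul_max_sub_rpow hβ hK hc hθ hv_nonneg (le_of_lt ht)
    _ = c / (1 + β) * ∑ k ∈ S, θ k * tk k ^ (1 + β) := by
        rw [integral_const_mul, integral_sum_mul_max_sub_rpow hβ htk, div_eq_mul_inv, mul_assoc]

end Solution

theorem stmt13_general
    (β K c : ℝ) (hβ : β ∈ Ioo (0 : ℝ) 1) (hK : 0 < K) (hc : 0 < c)
    (m : ℕ) (θ tk : ℕ → ℝ)
    (hθ : ∀ k < m, 0 ≤ θ k) (htk : ∀ k < m, 0 < tk k)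
    (f : ℝ → ℝ)
    (hf : ∀ t, f t = ∑ k ∈ Finset.range m,
      Set.indicator (Icc (0 : ℝ) (tk k)) (fun _ => θ k) t)
    (v : ℝ → ℝ)
    (hv_nonneg : ∀ t, 0 ≤ v t)
    (hv_eq : ∀ t ≥ (0 : ℝ), v t = β * c * ∫ s in Set.Ioi (0 : ℝ),
      (f (t + s) - K * v (t + s) ^ (1 + β)) * s ^ (β - 1)) :
    (∀ t ≥ (0 : ℝ),
      v t ≤ β * c * ∫ s in Set.Ioi (0 : ℝ), f (t + s) * s ^ (β - 1) ∧
      β * c * ∫ s in Set.Ioi (0 : ℝ), f (t + s) * s ^ (β - 1) =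
        c * ∑ k ∈ Finset.range m, θ k * max (tk k - t) 0 ^ β) ∧
    (∫ t in Set.Ioi (0 : ℝ), v t ≤
      c / (1 + β) * ∑ k ∈ Finset.range m, θ k * tk k ^ (1 + β)) ∧
    (∀ ε > (0 : ℝ), ∃ δ > (0 : ℝ), ∀ (θ' : ℕ → ℝ) (v' : ℝ → ℝ),
      (∀ k < m, 0 ≤ θ' k ∧ θ' k ≤ δ) →
      Measurable v' → (∀ t, 0 ≤ v' t) → (∃ M, ∀ t, v' t ≤ M) →
      (∃ b : ℝ, ∀ t, b < t → v' t = 0) →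
      (∀ t ≥ (0 : ℝ), v' t = β * c * ∫ s in Set.Ioi (0 : ℝ),
        ((∑ k ∈ Finset.range m,
          Set.indicator (Icc (0 : ℝ) (tk k)) (fun _ => θ' k) (t + s)) -
          K * v' (t + s) ^ (1 + β)) * s ^ (β - 1)) →
      ∫ t in Set.Ioi (0 : ℝ), v' t ≤ ε) := by
  obtain rfl : f = stepFun (Finset.range m) θ tk := funext hf
  have hθ' : ∀ k ∈ Finset.range m, 0 ≤ θ k := fun k hk => hθ k (Finset.mem_range.1 hk)
  have htk' : ∀ k ∈ Finset.range m, 0 ≤ tk k := fun k hk => (htk k (Finset.mem_range.1 hk)).le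
  have hv : SolvesE β K c (stepFun (Finset.range m) θ tk) v := hv_eq
  have hkernel : ∀ t ≥ (0 : ℝ), β * c * ∫ s in Ioi 0, stepFun (Finset.range m) θ tk (t + s) *
      s ^ (β - 1) = c * ∑ k ∈ Finset.range m, θ k * max (tk k - t) 0 ^ β := fun t ht => by
    rw [mul_right_comm, integral_stepFun_add_mul_rpow hβ.1 ht, mul_comm]
  refine ⟨fun t ht => ⟨(hkernel t ht).symm ▸
      hv.le_sum_mul_max_sub_rpow hβ.1 hK.le hc.le hθ' hv_nonneg ht, hkernel t ht⟩,
    hv.integral_le hβ.1 hK.le hc.le hθ' htk' hv_nonneg, fun ε hε => ?_⟩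
  have hc' : 0 ≤ c / (1 + β) := div_nonneg hc.le (by linarith [hβ.1])
  set C := c / (1 + β) * ∑ k ∈ Finset.range m, tk k ^ (1 + β)
  have hC : 0 ≤ C := mul_nonneg hc'
    (Finset.sum_nonneg fun k hk => Real.rpow_nonneg (htk' k hk) _)
  refine ⟨ε / (C + 1), by positivity, fun θ' v' hθ'δ _ hv'_nonneg _ _ hv'_eq => ?_⟩
  have hv' : SolvesE β K c (stepFun (Finset.range m) θ' tk) v' := hv'_eq
  calc ∫ t in Ioi 0, v' t ≤ c / (1 + β) * ∑ k ∈ Finset.range m, θ' k * tk k ^ (1 + β) :=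
        hv'.integral_le hβ.1 hK.le hc.le (fun k hk => (hθ'δ k (Finset.mem_range.1 hk)).1)
          htk' hv'_nonneg
    _ ≤ c / (1 + β) * ∑ k ∈ Finset.range m, ε / (C + 1) * tk k ^ (1 + β) := by
        refine mul_le_mul_of_nonneg_left (Finset.sum_le_sum fun k hk => ?_) hc'
        exact mul_le_mul_of_nonneg_right (hθ'δ k (Finset.mem_range.1 hk)).2
          (Real.rpow_nonneg (htk' k hk) _)
    _ = ε / (C + 1) * C := by rw [← Finset.mul_sum]; ring
    _ ≤ ε := by
        rw [div_mul_eq_mul_div, div_le_iff₀ (by positivity)]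
        nlinarith

/-- any bounded Borel solution `v` of equation (E) vanishing
outside `[0,a]` satisfies
`v(t) ≤ βc ∫_0^∞ f(t+s) s^{β-1} ds = c ∑_k θ_k ((t_k - t)_+)^β` for `t ≥ 0`,
hence `∫_0^∞ v ≤ (c/(1+β)) ∑_k θ_k t_k^{1+β}`; so for fixed `t_1,…,t_m` the
map `(θ_1,…,θ_m) ↦ ∫_0^∞ v` tends to `0` as `(θ_1,…,θ_m) → 0`. -/
theorem stmt13
    (β K c : ℝ) (hβ : β ∈ Ioo (0 : ℝ) 1) (hK : 0 < K) (hc : 0 < c)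
    (m : ℕ) (hm : 0 < m) (θ tk : ℕ → ℝ)
    (hθ : ∀ k < m, 0 ≤ θ k) (htk : ∀ k < m, 0 < tk k)
    (a : ℝ) (ha_mem : ∃ k < m, tk k = a) (ha_max : ∀ k < m, tk k ≤ a)
    (f : ℝ → ℝ)
    (hf : ∀ t, f t = ∑ k ∈ Finset.range m,
      Set.indicator (Icc (0 : ℝ) (tk k)) (fun _ => θ k) t)
    (v : ℝ → ℝ)
    (hv_meas : Measurable v) (hv_nonneg : ∀ t, 0 ≤ v t)
    (hv_bdd : ∃ M, ∀ t, v t ≤ M)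
    (hv_supp : ∀ t, t ∉ Icc (0 : ℝ) a → v t = 0)
    (hv_eq : ∀ t ≥ (0 : ℝ), v t = β * c * ∫ s in Set.Ioi (0 : ℝ),
      (f (t + s) - K * v (t + s) ^ (1 + β)) * s ^ (β - 1)) :
    (∀ t ≥ (0 : ℝ),
      v t ≤ β * c * ∫ s in Set.Ioi (0 : ℝ), f (t + s) * s ^ (β - 1) ∧
      β * c * ∫ s in Set.Ioi (0 : ℝ), f (t + s) * s ^ (β - 1) =
        c * ∑ k ∈ Finset.range m, θ k * max (tk k - t) 0 ^ β) ∧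
    (∫ t in Set.Ioi (0 : ℝ), v t ≤
      c / (1 + β) * ∑ k ∈ Finset.range m, θ k * tk k ^ (1 + β)) ∧
    (∀ ε > (0 : ℝ), ∃ δ > (0 : ℝ), ∀ (θ' : ℕ → ℝ) (v' : ℝ → ℝ),
      (∀ k < m, 0 ≤ θ' k ∧ θ' k ≤ δ) →
      Measurable v' → (∀ t, 0 ≤ v' t) → (∃ M, ∀ t, v' t ≤ M) →
      (∃ b : ℝ, ∀ t, b < t → v' t = 0) →
      (∀ t ≥ (0 : ℝ), v' t = β * c * ∫ s in Set.Ioi (0 : ℝ),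
        ((∑ k ∈ Finset.range m,
          Set.indicator (Icc (0 : ℝ) (tk k)) (fun _ => θ' k) (t + s)) -
          K * v' (t + s) ^ (1 + β)) * s ^ (β - 1)) →
      ∫ t in Set.Ioi (0 : ℝ), v' t ≤ ε) :=
  stmt13_general β K c hβ hK hc m θ tk hθ htk f hf v hv_nonneg hv_eq
end
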